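/- Let F : 2^V → ℝ with F(∅) = 0 and F(A) ≥ 0 for all A, and define Θ_∞(w) = inf{ Σ_{S⊆V} α_S F(S) : α_S ≥ 0, Σ_{S⊆V} α_S = 1, Σ_{S : i∈S} α_S ≥ |w_i| ∀i }. Then for every w ∈ ℝ^V with ‖w‖_∞ ≤ 1, strong linear programming duality gives Θ_∞(w) = max{ Σ_{i∈V} κ_i |w_i| + min_{S⊆V} ( F(S) − Σ_{i∈S} κ_i ) : κ ∈ ℝ^V, κ ≥ 0 }, and the maximum over κ is attained. -/

import Mathlib

/-!
`Θ_∞(w)` is the value of a linear program over the simplex of weights `α` on `Finset V`. Its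
Lagrangian `L(α, κ) = Σᵢ κᵢ |wᵢ| + Σ_S α_S (F S - Σ_{i ∈ S} κᵢ)` is affine in each variable, so
Sion's minimax theorem on the compact simplex swaps `inf_α sup_{κ ≥ 0}` with `sup_{κ ≥ 0} inf_α`
(in `EReal`, because the inner supremum is `+∞` at infeasible `α`). The former is `Θ_∞(w)`; in the
latter the infimum over the simplex is attained at a vertex, which gives the dual objective.
The supremum is a maximum because capping `κ` at the oscillation of `F` does not decrease the dual
objective, which is continuous on the resulting compact box.
-/

open scoped BigOperators

/-- The non-homogeneous `ℓ∞`-relaxation `Θ_∞`. -/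
noncomputable def thetaInf {V : Type*} [Fintype V] [DecidableEq V]
    (F : Finset V → ℝ) (w : V → ℝ) : ℝ :=
  sInf { t : ℝ | ∃ α : Finset V → ℝ,
    (∀ S, 0 ≤ α S) ∧ (∑ S : Finset V, α S) = 1 ∧
    (∀ i : V, |w i| ≤ ∑ S : Finset V, if i ∈ S then α S else 0) ∧
    t = ∑ S : Finset V, α S * F S }

open Finset Set

lemma ciInf_le_sum_mul_of_mem_stdSimplex {ι : Type*} [Fintype ι] {α : ι → ℝ}
    (hα : α ∈ stdSimplex ℝ ι) (h : ι → ℝ) : ⨅ j, h j ≤ ∑ j, α j * h j :=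
  calc ⨅ j, h j = ∑ j, α j * ⨅ j, h j := by rw [← Finset.sum_mul, hα.2, one_mul]
    _ ≤ ∑ j, α j * h j := sum_le_sum fun j _ =>
      mul_le_mul_of_nonneg_left (ciInf_le (Finite.bddBelow_range h) j) (hα.1 j)

section

variable {V : Type*} [Fintype V] (F : Finset V → ℝ) (b : V → ℝ)

noncomputable def dualObjective (κ : V → ℝ) : ℝ :=
  (∑ i, κ i * b i) + ⨅ S : Finset V, (F S - ∑ i ∈ S, κ i)

def lagrangian (α : Finset V → ℝ) (κ : V → ℝ) : ℝ :=
  (∑ i, κ i * b i) + ∑ S, α S * (F S - ∑ i ∈ S, κ i)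

lemma dualObjective_le_lagrangian {α : Finset V → ℝ} (hα : α ∈ stdSimplex ℝ (Finset V))
    (κ : V → ℝ) : dualObjective F b κ ≤ lagrangian F b α κ :=
  add_le_add_right (ciInf_le_sum_mul_of_mem_stdSimplex hα _) _

lemma convexOn_lagrangian_left (κ : V → ℝ) : ConvexOn ℝ univ (fun α => lagrangian F b α κ) := by
  have : (fun α => lagrangian F b α κ) = (fun _ => ∑ i, κ i * b i) +
      ⇑((dotProductBilin ℝ ℝ).flip (fun S => F S - ∑ i ∈ S, κ i)) := by
    ext α; simp [lagrangian, dotProduct]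
  rw [this]
  exact (convexOn_const _ convex_univ).add (LinearMap.convexOn _ convex_univ)

lemma continuous_lagrangian_left (κ : V → ℝ) : Continuous (fun α => lagrangian F b α κ) := by
  unfold lagrangian; fun_prop

lemma continuous_lagrangian_right (α : Finset V → ℝ) :
    Continuous (fun κ => lagrangian F b α κ) := by
  unfold lagrangian; fun_prop

lemma continuous_dualObjective : Continuous (dualObjective F b) := by
  have : dualObjective F b = fun κ =>
      ∑ i, κ i * b i + univ.inf' univ_nonempty (fun S => F S - ∑ i ∈ S, κ i) := by
    ext κ; rw [dualObjective, inf'_univ_eq_ciInf]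
  rw [this]
  exact (continuous_finsetSum _ fun i _ => by fun_prop).add
    (Continuous.finset_inf'_apply _ fun S _ => by fun_prop)

variable [DecidableEq V]

def coverage (α : Finset V → ℝ) (i : V) : ℝ := ∑ S : Finset V, if i ∈ S then α S else 0

lemma sum_mul_sum_eq_sum_mul_coverage (α : Finset V → ℝ) (κ : V → ℝ) :
    ∑ S, α S * ∑ i ∈ S, κ i = ∑ i, κ i * coverage α i := by
  simp only [coverage, Finset.mul_sum, ← Finset.sum_filter]
  rw [Finset.sum_comm' (t' := univ) (s' := fun i => univ.filter (i ∈ ·)) (by simp)]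
  exact sum_congr rfl fun i _ => sum_congr rfl fun S _ => mul_comm _ _

lemma lagrangian_eq (α : Finset V → ℝ) (κ : V → ℝ) :
    lagrangian F b α κ = ∑ S, α S * F S + ∑ i, κ i * (b i - coverage α i) := by
  simp only [lagrangian, mul_sub, sum_sub_distrib, sum_mul_sum_eq_sum_mul_coverage]
  ring

lemma lagrangian_zero_right (α : Finset V → ℝ) : lagrangian F b α 0 = ∑ S, α S * F S := by
  simp [lagrangian_eq]

lemma lagrangian_single_right (α : Finset V → ℝ) (i : V) (t : ℝ) :
    lagrangian F b α (Pi.single i t) = ∑ S, α S * F S + t * (b i - coverage α i) := by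
  simp [lagrangian_eq, Pi.single_apply]

lemma lagrangian_single_left (S : Finset V) (κ : V → ℝ) :
    lagrangian F b (Pi.single S 1) κ = ∑ i, κ i * b i + (F S - ∑ i ∈ S, κ i) := by
  simp [lagrangian, Pi.single_apply]

lemma exists_lagrangian_eq_dualObjective (κ : V → ℝ) :
    ∃ α ∈ stdSimplex ℝ (Finset V), lagrangian F b α κ = dualObjective F b κ := by
  obtain ⟨S, hS⟩ := exists_eq_ciInf_of_finite (f := fun S : Finset V => F S - ∑ i ∈ S, κ i)
  exact ⟨Pi.single S 1, single_mem_stdSimplex ℝ S, by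
    rw [lagrangian_single_left, dualObjective, hS]⟩

lemma lagrangian_le_of_le_coverage {α : Finset V → ℝ} {κ : V → ℝ} (hκ : 0 ≤ κ)
    (hb : ∀ i, b i ≤ coverage α i) : lagrangian F b α κ ≤ ∑ S, α S * F S := by
  have : ∑ i, κ i * (b i - coverage α i) ≤ 0 :=
    sum_nonpos fun i _ => mul_nonpos_of_nonneg_of_nonpos (hκ i) (sub_nonpos.2 (hb i))
  linarith [lagrangian_eq F b α κ]

lemma concaveOn_lagrangian_right (α : Finset V → ℝ) :
    ConcaveOn ℝ univ (fun κ => lagrangian F b α κ) := by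
  have : (fun κ => lagrangian F b α κ) = (fun _ => ∑ S, α S * F S) +
      ⇑((dotProductBilin ℝ ℝ).flip (b - coverage α)) := by
    ext κ; simp [lagrangian_eq, dotProduct, mul_sub, sum_sub_distrib]
  rw [this]
  exact (concaveOn_const _ convex_univ).add (LinearMap.concaveOn _ convex_univ)

/- Off the feasible set the supremum is `+∞`, approached along a violated coordinate. -/
lemma le_iSup_lagrangian {c : ℝ} (hc : ∀ α ∈ stdSimplex ℝ (Finset V),
      (∀ i, b i ≤ coverage α i) → c ≤ ∑ S, α S * F S)
    {α : Finset V → ℝ} (hα : α ∈ stdSimplex ℝ (Finset V)) :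
    (c : EReal) ≤ ⨆ κ ∈ Ici (0 : V → ℝ), (lagrangian F b α κ : EReal) := by
  by_cases hfeas : ∀ i, b i ≤ coverage α i
  · refine le_iSup₂_of_le (0 : V → ℝ) (mem_Ici.2 le_rfl) (EReal.coe_le_coe_iff.2 ?_)
    rw [lagrangian_zero_right]
    exact hc α hα hfeas
  · simp only [not_forall, not_le] at hfeas
    obtain ⟨i, hi⟩ := hfeas
    have hgap : 0 < b i - coverage α i := sub_pos.2 hi
    set t := |c - ∑ S, α S * F S| / (b i - coverage α i)
    refine le_iSup₂_of_le (Pi.single i t)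
      (Pi.single_nonneg.2 (div_nonneg (abs_nonneg _) hgap.le)) (EReal.coe_le_coe_iff.2 ?_)
    rw [lagrangian_single_right, div_mul_cancel₀ _ hgap.ne']
    linarith [le_abs_self (c - ∑ S, α S * F S)]

lemma iInf_iSup_lagrangian_eq_iSup_iInf :
    ⨅ α ∈ stdSimplex ℝ (Finset V), ⨆ κ ∈ Ici (0 : V → ℝ), (lagrangian F b α κ : EReal) =
      ⨆ κ ∈ Ici (0 : V → ℝ), ⨅ α ∈ stdSimplex ℝ (Finset V), (lagrangian F b α κ : EReal) :=
  Sion.minimax' ⟨_, single_mem_stdSimplex ℝ ∅⟩ (convex_stdSimplex ℝ _) (isCompact_stdSimplex ℝ _)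
    (fun κ _ => (continuous_coe_real_ereal.comp
      (continuous_lagrangian_left F b κ)).lowerSemicontinuous.lowerSemicontinuousOn _)
    (fun κ _ => ((convexOn_lagrangian_left F b κ).subset (subset_univ _)
      (convex_stdSimplex ℝ _)).quasiconvexOn.monotone_comp (g := Real.toEReal)
      EReal.coe_strictMono.monotone)
    (convex_Ici 0)
    (fun α _ => (continuous_coe_real_ereal.comp
      (continuous_lagrangian_right F b α)).upperSemicontinuous.upperSemicontinuousOn _)
    (fun α _ => ((concaveOn_lagrangian_right F b α).subset (subset_univ _)
      (convex_Ici 0)).quasiconcaveOn.monotone_comp (g := Real.toEReal)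
      EReal.coe_strictMono.monotone)

lemma le_iSup_dualObjective {c : ℝ} (hc : ∀ α ∈ stdSimplex ℝ (Finset V),
      (∀ i, b i ≤ coverage α i) → c ≤ ∑ S, α S * F S) :
    (c : EReal) ≤ ⨆ κ ∈ Ici (0 : V → ℝ), (dualObjective F b κ : EReal) :=
  calc (c : EReal)
      ≤ ⨅ α ∈ stdSimplex ℝ (Finset V), ⨆ κ ∈ Ici (0 : V → ℝ), (lagrangian F b α κ : EReal) :=
        le_iInf₂ fun _ hα => le_iSup_lagrangian F b hc hα
    _ = ⨆ κ ∈ Ici (0 : V → ℝ), ⨅ α ∈ stdSimplex ℝ (Finset V), (lagrangian F b α κ : EReal) :=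
        iInf_iSup_lagrangian_eq_iSup_iInf F b
    _ ≤ ⨆ κ ∈ Ici (0 : V → ℝ), (dualObjective F b κ : EReal) := iSup₂_mono fun κ _ => by
        obtain ⟨α, hα, h⟩ := exists_lagrangian_eq_dualObjective F b κ
        exact iInf₂_le_of_le α hα (EReal.coe_le_coe_iff.2 h.le)

/- Capping `κ` at `M` costs at most `excess` in the linear term. For the minimum, compare `S`
with `S ∪ T`, `T` the capped coordinates: `F (S ∪ T) ≤ F S + M * #(T \ S)`, while the sum of `κ`
over `S ∪ T` exceeds that of the capped `κ` over `S` by `excess + M * #(T \ S)`. -/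
lemma dualObjective_le_dualObjective_min {M : ℝ} (hM : ∀ S T, F T ≤ F S + M)
    (hb1 : ∀ i, b i ≤ 1) (κ : V → ℝ) :
    dualObjective F b κ ≤ dualObjective F b (fun i => min (κ i) M) := by
  set excess := ∑ i, (κ i - min (κ i) M)
  set T := univ.filter (fun i => M < κ i)
  have hM0 : 0 ≤ M := by linarith [hM ∅ ∅]
  have hlinear : ∑ i, κ i * b i ≤ ∑ i, min (κ i) M * b i + excess := by
    rw [← sub_le_iff_le_add', ← sum_sub_distrib]
    refine sum_le_sum fun i _ => ?_
    rw [← sub_mul]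
    exact mul_le_of_le_one_right (sub_nonneg.2 (min_le_left _ _)) (hb1 i)
  have hinf : ∀ S, (⨅ S', (F S' - ∑ i ∈ S', κ i)) + excess ≤ F S - ∑ i ∈ S, min (κ i) M := by
    intro S
    have hmin := ciInf_le (Finite.bddBelow_range fun S' => F S' - ∑ i ∈ S', κ i) (S ∪ T)
    have hsplit : ∑ i ∈ S ∪ T, κ i = ∑ i ∈ S ∪ T, min (κ i) M + excess := by
      rw [← sub_eq_iff_eq_add', ← sum_sub_distrib]
      refine sum_subset (subset_univ _) fun i _ hi => ?_
      have : κ i ≤ M := not_lt.1 fun h => hi (mem_union_right _ (by simp [T, h]))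
      simp [min_eq_left this]
    have hcapped : ∑ i ∈ S ∪ T, min (κ i) M = ∑ i ∈ S, min (κ i) M + M * #(T \ S) := by
      have hTS : ∑ i ∈ T \ S, min (κ i) M = M * #(T \ S) := by
        rw [sum_congr rfl fun i hi =>
            min_eq_right (by simpa [T] using (mem_sdiff.1 hi).1 : M < κ i).le,
          sum_const, nsmul_eq_mul, mul_comm]
      rw [← union_sdiff_self_eq_union, sum_union disjoint_sdiff, hTS]
    have hgrow : F (S ∪ T) ≤ F S + M * #(T \ S) := by
      rcases (T \ S).eq_empty_or_nonempty with h | h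
      · rw [sdiff_eq_empty_iff_subset.1 h |> Finset.union_eq_left.2, h]; simp
      · have : (1 : ℝ) ≤ #(T \ S) := by exact_mod_cast h.card_pos
        nlinarith [hM S (S ∪ T)]
    linarith
  unfold dualObjective
  linarith [le_ciInf hinf]

lemma exists_forall_dualObjective_le (hb1 : ∀ i, b i ≤ 1) :
    ∃ κ₀, 0 ≤ κ₀ ∧ ∀ κ, 0 ≤ κ → dualObjective F b κ ≤ dualObjective F b κ₀ := by
  obtain ⟨u, hu⟩ := Finite.bddAbove_range F
  obtain ⟨l, hl⟩ := Finite.bddBelow_range F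
  have hM : ∀ S T, F T ≤ F S + (u - l) := fun S T => by
    linarith [hu (mem_range_self T), hl (mem_range_self S)]
  have hM0 : 0 ≤ u - l := by linarith [hM ∅ ∅]
  obtain ⟨κ₀, hκ₀, hmax⟩ :=
    (isCompact_Icc (a := (0 : V → ℝ)) (b := fun _ => u - l)).exists_isMaxOn
      ⟨0, le_rfl, fun _ => hM0⟩ (continuous_dualObjective F b).continuousOn
  refine ⟨κ₀, hκ₀.1, fun κ hκ => (dualObjective_le_dualObjective_min F b hM hb1 κ).trans
    (hmax ⟨fun i => le_min (hκ i) hM0, fun i => min_le_right _ _⟩)⟩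

lemma thetaInf_le {w : V → ℝ} {α : Finset V → ℝ}
    (hα : α ∈ stdSimplex ℝ (Finset V)) (hcov : ∀ i, |w i| ≤ coverage α i) :
    thetaInf F w ≤ ∑ S, α S * F S :=
  csInf_le ⟨⨅ S, F S, by
    rintro t ⟨α, hα0, hα1, -, rfl⟩
    exact ciInf_le_sum_mul_of_mem_stdSimplex ⟨hα0, hα1⟩ F⟩ ⟨α, hα.1, hα.2, hcov, rfl⟩

lemma le_thetaInf {w : V → ℝ} (hw : ∀ i, |w i| ≤ 1) {c : ℝ}
    (hc : ∀ α ∈ stdSimplex ℝ (Finset V), (∀ i, |w i| ≤ coverage α i) → c ≤ ∑ S, α S * F S) :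
    c ≤ thetaInf F w := by
  have hvertex := single_mem_stdSimplex ℝ (Finset.univ : Finset V)
  refine le_csInf ⟨_, Pi.single Finset.univ 1, hvertex.1, hvertex.2, fun i => ?_, rfl⟩ ?_
  · rw [sum_eq_single Finset.univ (fun S _ hS => by simp [hS]) (by simp)]
    simpa using hw i
  · rintro t ⟨α, hα0, hα1, hcov, rfl⟩
    exact hc α ⟨hα0, hα1⟩ hcov

end

theorem stmt_16_general {V : Type*} [Fintype V] [DecidableEq V]
    (F : Finset V → ℝ) (w : V → ℝ) (hw : ∀ i, |w i| ≤ 1) :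
    IsGreatest
      { t : ℝ | ∃ κ : V → ℝ, (∀ i, 0 ≤ κ i) ∧
        t = (∑ i : V, κ i * |w i|) + ⨅ S : Finset V, (F S - ∑ i ∈ S, κ i) }
      (thetaInf F w) := by
  set b : V → ℝ := fun i => |w i|
  have weak : ∀ κ, 0 ≤ κ → dualObjective F b κ ≤ thetaInf F w := fun κ hκ =>
    le_thetaInf F hw fun α hα hcov =>
      (dualObjective_le_lagrangian F b hα κ).trans (lagrangian_le_of_le_coverage F b hκ hcov)
  obtain ⟨κ₀, hκ₀, hmax⟩ := exists_forall_dualObjective_le F b hw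
  have strong : thetaInf F w ≤ dualObjective F b κ₀ := EReal.coe_le_coe_iff.1 <|
    (le_iSup_dualObjective F b fun α hα hcov => thetaInf_le F hα hcov).trans <|
      iSup₂_le fun κ hκ => EReal.coe_le_coe_iff.2 (hmax κ hκ)
  refine ⟨⟨κ₀, hκ₀, le_antisymm strong (weak κ₀ hκ₀)⟩, ?_⟩
  rintro t ⟨κ, hκ, rfl⟩
  exact weak κ hκ

theorem stmt_16 {V : Type*} [Fintype V] [DecidableEq V]
    (F : Finset V → ℝ) (hF0 : F ∅ = 0) (hFnn : ∀ A : Finset V, 0 ≤ F A)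
    (w : V → ℝ) (hw : ∀ i, |w i| ≤ 1) :
    IsGreatest
      { t : ℝ | ∃ κ : V → ℝ, (∀ i, 0 ≤ κ i) ∧
        t = (∑ i : V, κ i * |w i|) + ⨅ S : Finset V, (F S - ∑ i ∈ S, κ i) }
      (thetaInf F w) :=
  stmt_16_general F w hw
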